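/- arXiv:2308.06178 — 6 statements merged into one kernel-verified Lean document; each statement's English description precedes it below -/
import Mathlib

section
/- Let p be a probability distribution on I satisfying p(s) ≥ κ for all s ∈ I, where κ = e^{−2Jσ²}/|I| ∈ (0,1], and let δ = κ/(12σ). Then for every t ∈ [δ, 2π − δ], |Σ_{s∈I} p(s) e^{its}| ≤ exp(−κ² sin²(δ/2)). In particular this bound holds uniformly in the boundary condition ω for the single-spin Gibbs distributions p_x^ω(s) = e^{h_x^ω(s)}/Σ_{s'∈I} e^{h_x^ω(s')} whenever |h_x^ω(s)| ≤ Jσ² for all s ∈ I. -/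
/-!
Only two neighbouring spins are needed. For `a, b ≥ 0` one has
`|a + b e^{iθ}|² = (a + b)² - 4ab sin²(θ/2)`, so cancellation between the terms at `m` and
`m + 1` removes at least `2 p(m) p(m+1) sin²(t/2) ≥ 2κ² sin²(δ/2)` from their mass, while the
remaining terms contribute at most their own mass. Hence the modulus is at most
`1 - κ² sin²(δ/2) ≤ exp(-κ² sin²(δ/2))`.
-/

open Finset Complex

theorem sq_norm_add_mul_exp_mul_I (a b θ : ℝ) :
    ‖(a : ℂ) + b * exp (θ * I)‖ ^ 2 = (a + b) ^ 2 - 4 * a * b * Real.sin (θ / 2) ^ 2 := by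
  have hcos : Real.cos θ = 1 - 2 * Real.sin (θ / 2) ^ 2 := by
    rw [Real.sin_sq_eq_half_sub, mul_div_cancel₀ θ two_ne_zero]; ring
  have hparts : (a : ℂ) + b * exp (θ * I) = ↑(a + b * Real.cos θ) + ↑(b * Real.sin θ) * I := by
    rw [exp_mul_I, ← ofReal_cos, ← ofReal_sin]; push_cast; ring
  rw [Complex.sq_norm, hparts, normSq_add_mul_I]
  linear_combination b ^ 2 * Real.sin_sq_add_cos_sq θ + 2 * a * b * hcos

theorem norm_add_mul_exp_mul_I_le {a b : ℝ} (ha : 0 ≤ a) (hb : 0 ≤ b) (hab : a + b ≤ 1)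
    (θ : ℝ) : ‖(a : ℂ) + b * exp (θ * I)‖ ≤ a + b - 2 * a * b * Real.sin (θ / 2) ^ 2 := by
  have hs1 : Real.sin (θ / 2) ^ 2 ≤ 1 := Real.sin_sq_le_one _
  have hab0 : 0 ≤ a * b := mul_nonneg ha hb
  have hs := mul_le_mul_of_nonneg_left hs1 hab0
  -- `4ab ≤ (a + b)² ≤ a + b`
  have hrhs : 0 ≤ a + b - 2 * a * b * Real.sin (θ / 2) ^ 2 := by
    nlinarith [sq_nonneg (a - b)]
  rw [← pow_le_pow_iff_left₀ (norm_nonneg _) hrhs two_ne_zero, sq_norm_add_mul_exp_mul_I]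
  nlinarith [mul_nonneg hab0 (sq_nonneg (Real.sin (θ / 2))), sq_nonneg (Real.sin (θ / 2))]

theorem norm_sum_mul_exp_mul_I_le {α : Type*} [DecidableEq α] {S : Finset α} {p θ : α → ℝ}
    (hp0 : ∀ s ∈ S, 0 ≤ p s) (hp1 : ∑ s ∈ S, p s = 1) {u v : α} (hu : u ∈ S) (hv : v ∈ S)
    (huv : u ≠ v) :
    ‖∑ s ∈ S, (p s : ℂ) * exp (θ s * I)‖ ≤
      1 - 2 * p u * p v * Real.sin ((θ v - θ u) / 2) ^ 2 := by
  have hpair : {u, v} ⊆ S := insert_subset hu (singleton_subset_iff.2 hv)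
  have hrest : ∑ s ∈ S \ {u, v}, p s = 1 - p u - p v := by
    rw [← hp1, ← sum_sdiff hpair, sum_pair huv]; ring
  have hrest0 : 0 ≤ 1 - p u - p v :=
    hrest ▸ sum_nonneg fun s hs => hp0 s (mem_sdiff.1 hs).1
  have hnorm_rest : ‖∑ s ∈ S \ {u, v}, (p s : ℂ) * exp (θ s * I)‖ ≤ 1 - p u - p v := by
    refine (norm_sum_le _ _).trans (hrest ▸ sum_le_sum fun s hs => ?_)
    rw [norm_mul, norm_exp_ofReal_mul_I, mul_one, norm_real, Real.norm_of_nonneg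
      (hp0 s (mem_sdiff.1 hs).1)]
  have hfactor : (p u : ℂ) * exp (θ u * I) + p v * exp (θ v * I) =
      exp (θ u * I) * (p u + p v * exp (↑(θ v - θ u) * I)) := by
    rw [ofReal_sub, sub_mul, exp_sub]; field_simp [exp_ne_zero]
  have hnorm_pair := norm_add_mul_exp_mul_I_le (hp0 u hu) (hp0 v hv) (by linarith) (θ v - θ u)
  rw [← sum_sdiff hpair, sum_pair huv, hfactor]
  calc _ ≤ _ := norm_add_le _ _
    _ ≤ _ := by
      rw [norm_mul, norm_exp_ofReal_mul_I, one_mul]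
      linarith

theorem sin_half_le_sin_half {δ t : ℝ} (hδ : 0 ≤ δ) (ht₁ : δ ≤ t) (ht₂ : t ≤ 2 * Real.pi - δ) :
    Real.sin (δ / 2) ≤ Real.sin (t / 2) := by
  rcases le_total t Real.pi with ht | ht
  · exact Real.sin_le_sin_of_le_of_le_pi_div_two (by linarith) (by linarith) (by linarith)
  · rw [← Real.sin_pi_sub (t / 2)]
    exact Real.sin_le_sin_of_le_of_le_pi_div_two (by linarith) (by linarith) (by linarith)

theorem single_spin_charfun_bound_general
    (m n : ℤ) (hmn : m < n) (J σ κ δ : ℝ)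
    (hσ : σ = max |(m : ℝ)| |(n : ℝ)|)
    (hκ : κ = Real.exp (-2 * J * σ ^ 2) / ((Finset.Icc m n).card : ℝ))
    (hδ : δ = κ / (12 * σ))
    (p : ℤ → ℝ)
    (hp0 : ∀ s ∈ Finset.Icc m n, 0 ≤ p s)
    (hp1 : ∑ s ∈ Finset.Icc m n, p s = 1)
    (hpκ : ∀ s ∈ Finset.Icc m n, κ ≤ p s)
    (t : ℝ) (ht1 : δ ≤ t) (ht2 : t ≤ 2 * Real.pi - δ) :
    ‖∑ s ∈ Finset.Icc m n, (p s : ℂ) * Complex.exp (Complex.I * t * s)‖ ≤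
      Real.exp (-(κ ^ 2 * Real.sin (δ / 2) ^ 2)) := by
  have hm : m ∈ Icc m n := mem_Icc.2 ⟨le_rfl, hmn.le⟩
  have hm1 : m + 1 ∈ Icc m n := mem_Icc.2 ⟨by omega, by omega⟩
  have hκ0 : 0 ≤ κ := hκ ▸ by positivity
  have hσ0 : 0 ≤ σ := hσ ▸ (abs_nonneg _).trans (le_max_left _ _)
  have hδ0 : 0 ≤ δ := hδ ▸ by positivity
  have hsinδ : 0 ≤ Real.sin (δ / 2) :=
    Real.sin_nonneg_of_nonneg_of_le_pi (by linarith) (by linarith)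
  have hsin := pow_le_pow_left₀ hsinδ (sin_half_le_sin_half hδ0 ht1 ht2) 2
  have hpm := mul_le_mul (hpκ m hm) (hpκ _ hm1) hκ0 (hp0 m hm)
  have hchar := norm_sum_mul_exp_mul_I_le (θ := fun s : ℤ => t * s) hp0 hp1 hm hm1 (by omega)
  simp only [Int.cast_add, Int.cast_one, mul_add, mul_one, add_sub_cancel_left] at hchar
  calc _ = ‖∑ s ∈ Icc m n, (p s : ℂ) * exp (↑(t * s) * I)‖ := by
        congr 1; refine sum_congr rfl fun s _ => ?_; push_cast; ring_nf
    _ ≤ 1 - 2 * p m * p (m + 1) * Real.sin (t / 2) ^ 2 := hchar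
    _ ≤ 1 - κ ^ 2 * Real.sin (δ / 2) ^ 2 := by
        nlinarith [mul_le_mul (sq κ ▸ hpm) hsin (sq_nonneg _) (mul_nonneg (hp0 m hm) (hp0 _ hm1))]
    _ ≤ _ := Real.one_sub_le_exp_neg _

/-- Let `I = {m,…,n} ⊂ ℤ` (`m < n`), `σ = max_{s∈I}|s|`, `J ≥ 0`,
`κ = e^{−2Jσ²}/|I| ∈ (0,1]`, `δ = κ/(12σ)`. If `p` is a probability distribution
on `I` with `p(s) ≥ κ` for all `s ∈ I`, then for every `t ∈ [δ, 2π − δ]`,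
`|Σ_{s∈I} p(s) e^{its}| ≤ exp(−κ² sin²(δ/2))`. -/
theorem single_spin_charfun_bound
    (m n : ℤ) (hmn : m < n) (J σ κ δ : ℝ) (hJ : 0 ≤ J)
    (hσ : σ = max |(m : ℝ)| |(n : ℝ)|)
    (hκ : κ = Real.exp (-2 * J * σ ^ 2) / ((Finset.Icc m n).card : ℝ))
    (hδ : δ = κ / (12 * σ))
    (p : ℤ → ℝ)
    (hp0 : ∀ s ∈ Finset.Icc m n, 0 ≤ p s)
    (hp1 : ∑ s ∈ Finset.Icc m n, p s = 1)
    (hpκ : ∀ s ∈ Finset.Icc m n, κ ≤ p s)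
    (t : ℝ) (ht1 : δ ≤ t) (ht2 : t ≤ 2 * Real.pi - δ) :
    ‖∑ s ∈ Finset.Icc m n, (p s : ℂ) * Complex.exp (Complex.I * t * s)‖ ≤
      Real.exp (-(κ ^ 2 * Real.sin (δ / 2) ^ 2)) :=
  single_spin_charfun_bound_general m n hmn J σ κ δ hσ hκ hδ p hp0 hp1 hpκ t ht1 ht2
end

section
/- For any probability distribution p on a finite set I ⊂ ℝ and any t ∈ ℝ, |Σ_{s∈I} p(s)e^{its}| ≤ exp( − Σ_{(s,s')∈I×I} p(s)p(s') sin²((s−s')t/2) ). (Indeed |Σ_s p(s)e^{its}|² = Σ_{(s,s')} p(s)p(s') cos((s−s')t), and x ≤ e^{(x²−1)/2} for x > 0.) -/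
open Finset

/-!
Expanding the square, `|Σ p(s) e^{its}|² = Σ p(s)p(s') cos((s - s')t) = 1 - 2S`, where `S` is the
double sum of `p(s)p(s') sin²((s - s')t/2)`; then `x ≤ exp((x² - 1)/2)` for `x ≥ 0`, which is
`1 + y ≤ eʸ` at `y = x² - 1`, gives `|Σ p(s) e^{its}| ≤ exp(-S)`.
-/

theorem Real.le_exp_sq_sub_one_div_two {x : ℝ} (hx : 0 ≤ x) : x ≤ Real.exp ((x ^ 2 - 1) / 2) := by
  have hsq : x ^ 2 ≤ Real.exp ((x ^ 2 - 1) / 2) ^ 2 := by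
    rw [← Real.exp_nat_mul, Nat.cast_two, mul_div_cancel₀ _ two_ne_zero]
    linarith [Real.add_one_le_exp (x ^ 2 - 1)]
  exact (pow_le_pow_iff_left₀ hx (Real.exp_pos _).le two_ne_zero).mp hsq

theorem norm_sq_sum_ofReal_mul_exp {ι : Type*} (s : Finset ι) (w x : ι → ℝ) (t : ℝ) :
    ‖∑ i ∈ s, (w i : ℂ) * Complex.exp (Complex.I * t * x i)‖ ^ 2 =
      ∑ i ∈ s, ∑ j ∈ s, w i * w j * Real.cos ((x i - x j) * t) := by
  set z := ∑ i ∈ s, (w i : ℂ) * Complex.exp (Complex.I * t * x i)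
  have hz : z * starRingEnd ℂ z = ∑ i ∈ s, ∑ j ∈ s,
      ((w i * w j : ℝ) : ℂ) * Complex.exp (((x i - x j) * t : ℝ) * Complex.I) := by
    simp only [z, map_sum, map_mul, Finset.sum_mul_sum, ← Complex.exp_conj, Complex.conj_ofReal,
      Complex.conj_I]
    refine Finset.sum_congr rfl fun i _ => Finset.sum_congr rfl fun j _ => ?_
    rw [mul_mul_mul_comm, ← Complex.exp_add]
    push_cast
    ring_nf
  rw [Complex.sq_norm, ← Complex.ofReal_re (Complex.normSq z), ← Complex.mul_conj, hz]
  simp only [Complex.re_sum, Complex.re_ofReal_mul, Complex.exp_ofReal_mul_I_re]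

theorem sum_sum_mul_cos_sub_eq {ι : Type*} (s : Finset ι) {w : ι → ℝ} (hw : ∑ i ∈ s, w i = 1)
    (x : ι → ℝ) (t : ℝ) :
    ∑ i ∈ s, ∑ j ∈ s, w i * w j * Real.cos ((x i - x j) * t) =
      1 - 2 * ∑ i ∈ s, ∑ j ∈ s, w i * w j * Real.sin ((x i - x j) * t / 2) ^ 2 := by
  have hcos (y : ℝ) : Real.cos y = 1 - 2 * Real.sin (y / 2) ^ 2 := by
    rw [← Real.cos_two_mul_eq_one_sub, mul_div_cancel₀ y two_ne_zero]
  calc _ = ∑ i ∈ s, ∑ j ∈ s, (w i * w j - 2 * (w i * w j * Real.sin ((x i - x j) * t / 2) ^ 2)) :=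
        Finset.sum_congr rfl fun i _ => Finset.sum_congr rfl fun j _ => by rw [hcos]; ring
    _ = (∑ i ∈ s, w i) * (∑ j ∈ s, w j) -
          2 * ∑ i ∈ s, ∑ j ∈ s, w i * w j * Real.sin ((x i - x j) * t / 2) ^ 2 := by
        simp only [Finset.sum_sub_distrib, ← Finset.mul_sum, Finset.sum_mul_sum]
    _ = _ := by rw [hw, one_mul]

theorem charfun_abs_le_exp_sin_sq_general
    (I : Finset ℝ) (p : ℝ → ℝ)
    (hp1 : ∑ s ∈ I, p s = 1) (t : ℝ) :
    ‖∑ s ∈ I, (p s : ℂ) * Complex.exp (Complex.I * t * s)‖ ≤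
      Real.exp (- ∑ s ∈ I, ∑ s' ∈ I, p s * p s' * Real.sin ((s - s') * t / 2) ^ 2) := by
  set S := ∑ s ∈ I, ∑ s' ∈ I, p s * p s' * Real.sin ((s - s') * t / 2) ^ 2
  have hnorm : ‖∑ s ∈ I, (p s : ℂ) * Complex.exp (Complex.I * t * s)‖ ^ 2 = 1 - 2 * S :=
    (norm_sq_sum_ofReal_mul_exp I p id t).trans (sum_sum_mul_cos_sub_eq I hp1 id t)
  calc _ ≤ _ := Real.le_exp_sq_sub_one_div_two (norm_nonneg _)
    _ = Real.exp (-S) := by rw [hnorm]; congr 1; ring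

/-- For any probability distribution `p` on a finite set `I ⊂ ℝ`
and any `t ∈ ℝ`,
`|Σ_{s∈I} p(s)e^{its}| ≤ exp(−Σ_{(s,s')∈I×I} p(s)p(s') sin²((s−s')t/2))`. -/
theorem charfun_abs_le_exp_sin_sq
    (I : Finset ℝ) (p : ℝ → ℝ)
    (hp0 : ∀ s ∈ I, 0 ≤ p s) (hp1 : ∑ s ∈ I, p s = 1) (t : ℝ) :
    ‖∑ s ∈ I, (p s : ℂ) * Complex.exp (Complex.I * t * s)‖ ≤
      Real.exp (- ∑ s ∈ I, ∑ s' ∈ I, p s * p s' * Real.sin ((s - s') * t / 2) ^ 2) :=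
  charfun_abs_le_exp_sin_sq_general I p hp1 t
end

section
/- Let L be a finite set, (J_{xy})_{x≠y∈L} a symmetric family of reals with Σ_{y∈L, y≠x}|J_{xy}| ≤ J* for all x ∈ L, let k ≥ 2, let τ be any tree with vertex set {1,…,k}, and fix x ∈ L. Then Σ over tuples (x_1,…,x_k) ∈ L^k with x_1 = x and x_i ≠ x_j for i ≠ j of Π_{{i,j}∈E_τ} |J_{x_i x_j}| ≤ (J*)^{k−1}. -/
open Finset

open Classical in
/-- Abstract "parent function" version of the tree-sum bound. -/
lemma parent_sum_bound {α : Type*} [DecidableEq α]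
    (L : Finset α) (J : α → α → ℝ) (Jstar : ℝ)
    (hJsymm : ∀ x y, J x y = J y x)
    (hJrow : ∀ x ∈ L, ∑ y ∈ L.erase x, |J x y| ≤ Jstar)
    (x₀ : α) (hx₀ : x₀ ∈ L) :
    ∀ (n : ℕ) (V : Type) (_ : Fintype V) (_ : DecidableEq V)
      (r : V) (P : V → V) (d : V → ℕ),
      Fintype.card V = n → P r = r → (∀ v, v ≠ r → d (P v) < d v) →
    ∑ x ∈ (Fintype.piFinset fun _ : V => L).filter
        (fun x => x r = x₀ ∧ Function.Injective x),
      ∏ v ∈ univ.erase r, |J (x v) (x (P v))| ≤ Jstar ^ (n - 1) := by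
  intro n
  induction n with
  | zero =>
    intro V _ _ r P d hcard hPr hd
    have := Fintype.card_eq_zero_iff.mp hcard
    exact (this.false r).elim
  | succ n ih =>
    intro V _ _ r P d hcard hPr hd
    rcases Nat.eq_zero_or_pos n with hn | hn
    · -- card V = 1
      subst hn
      have h1 : Fintype.card V = 1 := hcard
      obtain ⟨y, hy⟩ := Fintype.card_eq_one_iff.mp h1
      have heq : ∀ v : V, v = r := fun v => (hy v).trans (hy r).symm
      have he : (univ : Finset V).erase r = ∅ := by
        ext v; simp [heq v]
      have hf : (Fintype.piFinset fun _ : V => L).filter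
          (fun x => x r = x₀ ∧ Function.Injective x) = {fun _ => x₀} := by
        ext x
        simp only [mem_filter, Fintype.mem_piFinset, mem_singleton]
        constructor
        · rintro ⟨hmem, hr, hinj⟩
          funext v; rw [heq v, hr]
        · rintro rfl
          refine ⟨fun _ => hx₀, rfl, fun a b _ => (heq a).trans (heq b).symm⟩
      rw [hf, he]
      simp
    · -- card V = n + 1, n ≥ 1
      -- pick a vertex v₀ ≠ r of maximal depth; it has no children
      have hrne : ((univ : Finset V).erase r).Nonempty := by
        rw [← Finset.card_pos, card_erase_of_mem (mem_univ r), Finset.card_univ, hcard]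
        omega
      obtain ⟨v₀, hv₀mem, hv₀max⟩ := exists_max_image ((univ : Finset V).erase r) d hrne
      have hv₀r : v₀ ≠ r := (mem_erase.mp hv₀mem).1
      have hnochild : ∀ w : V, w ≠ v₀ → P w ≠ v₀ := by
        intro w hw hpw
        by_cases hwr : w = r
        · subst hwr; rw [hPr] at hpw; exact hv₀r hpw.symm
        · have h1 := hd w hwr
          have h2 := hv₀max w (mem_erase.mpr ⟨hwr, mem_univ w⟩)
          rw [hpw] at h1; omega
      have hPv₀ : P v₀ ≠ v₀ := by
        intro h
        have := hd v₀ hv₀r; rw [h] at this; omega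
      have hJ0 : 0 ≤ Jstar :=
        le_trans (Finset.sum_nonneg fun y _ => abs_nonneg _) (hJrow x₀ hx₀)
      -- the smaller type
      set V' := {v : V // v ≠ v₀} with hV'
      have hcard' : Fintype.card V' = n := by
        have h1 : Fintype.card {v : V // ¬ v = v₀} = Fintype.card V - Fintype.card {v : V // v = v₀} :=
          Fintype.card_subtype_compl _
        rw [Fintype.card_subtype_eq, hcard] at h1
        exact h1
      set r' : V' := ⟨r, Ne.symm hv₀r⟩ with hr'
      set P' : V' → V' := fun v => ⟨P v.1, hnochild v.1 v.2⟩ with hP'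
      set pv : V' := ⟨P v₀, hPv₀⟩ with hpv
      have hihyp := ih V' inferInstance inferInstance r' P' (fun v => d v.1) hcard' (Subtype.ext hPr)
        (fun v hv => hd v.1 (fun h => hv (Subtype.ext h)))
      set S' := (Fintype.piFinset fun _ : V' => L).filter
        (fun x => x r' = x₀ ∧ Function.Injective x) with hS'
      set T := S'.sigma (fun x' => L \ (univ : Finset V').image x') with hT
      have key : ∑ x ∈ (Fintype.piFinset fun _ : V => L).filter
            (fun x => x r = x₀ ∧ Function.Injective x),
          ∏ v ∈ univ.erase r, |J (x v) (x (P v))|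
          = ∑ p ∈ T, |J p.2 (p.1 pv)| * ∏ v ∈ univ.erase r', |J (p.1 v) (p.1 (P' v))| := by
        refine Finset.sum_bij' (fun x _ => (⟨fun v => x v.1, x v₀⟩ : Σ _ : V' → α, α))
          (fun p _ => fun v => if h : v = v₀ then p.2 else p.1 ⟨v, h⟩) ?_ ?_ ?_ ?_ ?_
        · -- hi : membership in T
          rintro x hx
          rw [mem_filter] at hx
          obtain ⟨hpi, hxr, hinj⟩ := hx
          rw [Fintype.mem_piFinset] at hpi
          rw [hT, Finset.mem_sigma]
          constructor
          · rw [hS', mem_filter, Fintype.mem_piFinset]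
            refine ⟨fun v => hpi v.1, hxr, fun a b hab => Subtype.ext (hinj hab)⟩
          · rw [Finset.mem_sdiff, Finset.mem_image]
            refine ⟨hpi v₀, ?_⟩
            rintro ⟨v, -, hv⟩
            exact v.2 (hinj hv)
        · -- hj : membership in S
          rintro ⟨x', a⟩ hp
          rw [hT, Finset.mem_sigma, hS', mem_filter, Fintype.mem_piFinset,
            Finset.mem_sdiff, Finset.mem_image] at hp
          obtain ⟨⟨hpi, hxr, hinj⟩, haL, hanot⟩ := hp
          rw [mem_filter, Fintype.mem_piFinset]
          refine ⟨fun v => ?_, ?_, ?_⟩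
          · dsimp only
            split
            · exact haL
            · exact hpi _
          · dsimp only
            rw [dif_neg (Ne.symm hv₀r)]
            exact hxr
          · intro u w huw
            dsimp only at huw
            split at huw <;> split at huw
            next h1 h2 => rw [h1, h2]
            next h1 h2 => exact absurd ⟨⟨w, h2⟩, mem_univ _, huw.symm⟩ hanot
            next h1 h2 => exact absurd ⟨⟨u, h1⟩, mem_univ _, huw⟩ hanot
            next h1 h2 => exact congrArg Subtype.val (hinj huw)
        · -- left inverse
          intro x hx
          funext v
          dsimp only
          split
          next h => rw [h]
          next h => rfl
        · -- right inverse
          rintro ⟨x', a⟩ hp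
          refine Sigma.ext ?_ (heq_of_eq ?_)
          · funext v
            dsimp only
            rw [dif_neg v.2]
          · dsimp only
            rw [dif_pos rfl]
        · -- values agree
          intro x hx
          dsimp only
          rw [← Finset.mul_prod_erase _ _ hv₀mem]
          congr 1
          have himg : ((univ : Finset V).erase r).erase v₀
              = ((univ : Finset V').erase r').image Subtype.val := by
            ext v
            constructor
            · intro hv
              rw [mem_erase, mem_erase] at hv
              exact mem_image.mpr ⟨⟨v, hv.1⟩,
                mem_erase.mpr ⟨fun h => hv.2.1 (congrArg Subtype.val h), mem_univ _⟩, rfl⟩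
            · intro hv
              obtain ⟨w, hw, rfl⟩ := mem_image.mp hv
              rw [mem_erase] at hw
              exact mem_erase.mpr ⟨w.2,
                mem_erase.mpr ⟨fun h => hw.1 (Subtype.ext h), mem_univ _⟩⟩
          rw [himg, Finset.prod_image (fun a _ b _ h => Subtype.ext h)]
      rw [key]
      rw [hT, Finset.sum_sigma]
      have hstep : ∀ x' ∈ S',
          (∑ a ∈ L \ (univ : Finset V').image x',
            |J a (x' pv)| * ∏ v ∈ univ.erase r', |J (x' v) (x' (P' v))|)
          ≤ Jstar * ∏ v ∈ univ.erase r', |J (x' v) (x' (P' v))| := by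
        intro x' hx'
        rw [← Finset.sum_mul]
        have hG : (0:ℝ) ≤ ∏ v ∈ univ.erase r', |J (x' v) (x' (P' v))| :=
          Finset.prod_nonneg fun v _ => abs_nonneg _
        refine mul_le_mul_of_nonneg_right ?_ hG
        rw [hS', mem_filter, Fintype.mem_piFinset] at hx'
        have hxpvL : x' pv ∈ L := hx'.1 pv
        calc ∑ a ∈ L \ (univ : Finset V').image x', |J a (x' pv)|
            ≤ ∑ a ∈ L.erase (x' pv), |J a (x' pv)| := by
              refine Finset.sum_le_sum_of_subset_of_nonneg ?_ (fun a _ _ => abs_nonneg _)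
              intro a ha
              rw [Finset.mem_sdiff, Finset.mem_image] at ha
              rw [mem_erase]
              exact ⟨fun h => ha.2 ⟨pv, mem_univ _, h.symm⟩, ha.1⟩
          _ = ∑ a ∈ L.erase (x' pv), |J (x' pv) a| := by
              refine Finset.sum_congr rfl fun a _ => ?_
              rw [hJsymm]
          _ ≤ Jstar := hJrow _ hxpvL
      calc ∑ x' ∈ S', ∑ a ∈ L \ (univ : Finset V').image x',
              |J a (x' pv)| * ∏ v ∈ univ.erase r', |J (x' v) (x' (P' v))|
          ≤ ∑ x' ∈ S', Jstar * ∏ v ∈ univ.erase r', |J (x' v) (x' (P' v))| :=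
            Finset.sum_le_sum hstep
        _ = Jstar * ∑ x' ∈ S', ∏ v ∈ univ.erase r', |J (x' v) (x' (P' v))| := by
            rw [Finset.mul_sum]
        _ ≤ Jstar * Jstar ^ (n - 1) := mul_le_mul_of_nonneg_left hihyp hJ0
        _ = Jstar ^ (n + 1 - 1) := by
            rw [← pow_succ']
            congr 1
            omega
/-- Let `L` be a finite set, `(J_{xy})` symmetric with row sums of
absolute values bounded by `J*` on `L`, `k ≥ 2`, `τ` a tree with vertex set
`{1,…,k}` (here `Fin k`), and `x₀ ∈ L`. Then the sum over injective tuples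
`(x_1,…,x_k) ∈ L^k` with `x_1 = x₀` of `Π_{{i,j}∈E_τ}|J_{x_i x_j}|` is at most
`(J*)^{k−1}`. -/
theorem tree_sum_bound {α : Type*} [DecidableEq α]
    (L : Finset α) (J : α → α → ℝ) (Jstar : ℝ)
    (hJsymm : ∀ x y, J x y = J y x)
    (hJrow : ∀ x ∈ L, ∑ y ∈ L.erase x, |J x y| ≤ Jstar)
    (k : ℕ) (hk : 2 ≤ k)
    (τ : SimpleGraph (Fin k)) [DecidableRel τ.Adj] (hτ : τ.IsTree)
    (x₀ : α) (hx₀ : x₀ ∈ L) :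
    ∑ x ∈ (Fintype.piFinset (fun _ : Fin k => L)).filter
        (fun x => x ⟨0, by omega⟩ = x₀ ∧ Function.Injective x),
      ∏ e ∈ τ.edgeFinset,
        Sym2.lift ⟨fun i j => |J (x i) (x j)|,
          fun i j => by dsimp only; rw [hJsymm]⟩ e
      ≤ Jstar ^ (k - 1) := by
  classical
  set r : Fin k := ⟨0, by omega⟩ with hr
  have hconn := hτ.isConnected
  have hstep : ∀ v : Fin k, v ≠ r → ∃ w, τ.Adj v w ∧ τ.dist w r < τ.dist v r := by
    intro v hv
    obtain ⟨p, hp⟩ := hconn.exists_walk_length_eq_dist v r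
    cases p with
    | nil => exact absurd rfl hv
    | cons h q =>
      refine ⟨_, h, lt_of_le_of_lt (SimpleGraph.dist_le q) ?_⟩
      rw [← hp, SimpleGraph.Walk.length_cons]
      omega
  choose! W hW1 hW2 using hstep
  set P : Fin k → Fin k := fun v => if _ : v = r then r else W v with hP
  have hPr : P r = r := by rw [hP]; simp
  have hPadj : ∀ v, v ≠ r → τ.Adj v (P v) := by
    intro v hv; rw [hP]; simpa [hv] using hW1 v hv
  have hPd : ∀ v, v ≠ r → τ.dist (P v) r < τ.dist v r := by
    intro v hv; rw [hP]; simpa [hv] using hW2 v hv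
  -- rewrite the edge product as a product over non-root vertices
  have hinj : ∀ a ∈ (univ : Finset (Fin k)).erase r, ∀ b ∈ (univ : Finset (Fin k)).erase r,
      s(a, P a) = s(b, P b) → a = b := by
    intro a ha b hb hab
    rw [Sym2.eq_iff] at hab
    rcases hab with ⟨h1, -⟩ | ⟨h1, h2⟩
    · exact h1
    · have hda := hPd a (mem_erase.mp ha).1
      have hdb := hPd b (mem_erase.mp hb).1
      subst h1
      rw [h2] at hda
      omega
  have himg : ((univ : Finset (Fin k)).erase r).image (fun v => s(v, P v)) = τ.edgeFinset := by
    refine Finset.eq_of_subset_of_card_le ?_ ?_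
    · intro e he
      obtain ⟨v, hv, rfl⟩ := Finset.mem_image.mp he
      rw [SimpleGraph.mem_edgeFinset, SimpleGraph.mem_edgeSet]
      exact hPadj v (mem_erase.mp hv).1
    · have h1 := hτ.card_edgeFinset
      rw [Finset.card_image_of_injOn hinj, card_erase_of_mem (mem_univ r),
        Finset.card_univ, Fintype.card_fin]
      rw [Fintype.card_fin] at h1
      omega
  have hprod : ∀ x : Fin k → α,
      (∏ e ∈ τ.edgeFinset,
        Sym2.lift ⟨fun i j => |J (x i) (x j)|,
          fun i j => by dsimp only; rw [hJsymm]⟩ e)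
      = ∏ v ∈ (univ : Finset (Fin k)).erase r, |J (x v) (x (P v))| := by
    intro x
    rw [← himg, Finset.prod_image hinj]
    rfl
  calc ∑ x ∈ (Fintype.piFinset (fun _ : Fin k => L)).filter
        (fun x => x ⟨0, by omega⟩ = x₀ ∧ Function.Injective x),
      ∏ e ∈ τ.edgeFinset,
        Sym2.lift ⟨fun i j => |J (x i) (x j)|,
          fun i j => by dsimp only; rw [hJsymm]⟩ e
      = ∑ x ∈ (Fintype.piFinset (fun _ : Fin k => L)).filter
        (fun x => x r = x₀ ∧ Function.Injective x),
      ∏ v ∈ (univ : Finset (Fin k)).erase r, |J (x v) (x (P v))| :=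
        Finset.sum_congr rfl (fun x _ => hprod x)
    _ ≤ Jstar ^ (k - 1) := by
        have := parent_sum_bound L J Jstar hJsymm hJrow x₀ hx₀ k (Fin k)
          inferInstance inferInstance r P (fun v => τ.dist v r)
          (by simp) hPr hPd
        exact this
end

section
/- Let R be a finite set with |R| ≥ 2, (p_x)_{x∈R} probability weights on I, (J_{xy}) a symmetric family of reals, δ > 0, σ = max_{s∈I}|s|, and let ξ_t(R) = Σ_{s_R∈I^R} Σ_{g∈G_R} Σ_{S⊂R} Π_{{x,y}∈E_g}(e^{J_{xy}s_xs_y}−1) Π_{x∈S}(e^{its_x}−1) Π_{x∈R} p_x(s_x). Then for every t with 0 < t ≤ δ, |dξ_t(R)/dt| ≤ σ |R| w_0(R), where w_0(R) = (1+δσ)^{|R|} Σ_{s_R∈I^R} Π_{x∈R} p_x(s_x) · |Σ_{g∈G_R} Π_{{x,y}∈E_g}(e^{J_{xy}s_xs_y}−1)|. -/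
/-!
Summing over `S ⊆ R` factorizes: `Σ_S Π_{x∈S}(e^{its_x} − 1) = Π_x e^{its_x} = e^{it Σ_x s_x}`.
Hence `ξ_t(R)` is a trigonometric polynomial in `t` whose frequencies `Σ_x s_x` have size at most
`|R|σ` and whose amplitudes have norm `Π_x p_x(s_x) · |Σ_g Π_{E_g}(e^{J s s} − 1)|`. Differentiating
termwise bounds `|dξ_t/dt|` by `σ|R|` times the total amplitude, which is at most `w₀(R)` since
`(1 + δσ)^{|R|} ≥ 1`.
-/

open Finset
open scoped Classical

namespace SpinLCLT

/-- The set of connected simple graphs on a finite vertex type `W`. -/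
noncomputable def connGraphs (W : Type*) [Fintype W] : Finset (SimpleGraph W) :=
  Finset.univ.filter (fun g => g.Connected)

/-- The product over the edges `{x,y}` of a graph `g` of the Mayer factors
`e^{J_{xy} f(x) f(y)} − 1`. -/
noncomputable def edgeProd {W : Type*} [Fintype W] [DecidableEq W]
    (J : W → W → ℝ) (hJ : ∀ x y, J x y = J y x) (f : W → ℝ)
    (g : SimpleGraph W) : ℂ :=
  ∏ e ∈ g.edgeFinset,
    Sym2.lift ⟨fun x y => Complex.exp ((J x y * f x * f y : ℝ) : ℂ) - 1,
      fun x y => by dsimp only; rw [hJ x y, mul_right_comm]⟩ e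

/-- The polymer activity `ξ_t(R)`:
`ξ_t({x}) = Σ_{s∈I}(e^{its}−1)p_x(s)` and, for `|R| ≥ 2`,
`ξ_t(R) = Σ_{s_R∈I^R} Σ_{g∈G_R} Σ_{S⊆R} Π_{{x,y}∈E_g}(e^{J_{xy}s_xs_y}−1)
Π_{x∈S}(e^{its_x}−1) Π_{x∈R} p_x(s_x)`, where `I = Finset.Icc a b`. -/
noncomputable def xi (a b : ℤ) {V : Type*} [DecidableEq V] (p : V → ℤ → ℝ)
    (J : V → V → ℝ) (hJ : ∀ x y, J x y = J y x) (R : Finset V) (t : ℝ) : ℂ :=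
  if R.card = 1 then
    ∑ x ∈ R, ∑ z ∈ Finset.Icc a b,
      (Complex.exp (Complex.I * t * z) - 1) * (p x z : ℂ)
  else
    ∑ s ∈ Fintype.piFinset (fun _ : ↥R => Finset.Icc a b),
      ∑ g ∈ connGraphs ↥R,
        ∑ S ∈ (Finset.univ : Finset ↥R).powerset,
          (edgeProd (fun x y : ↥R => J ↑x ↑y) (fun x y => hJ ↑x ↑y)
              (fun x : ↥R => (s x : ℝ)) g) *
            (∏ x ∈ S, (Complex.exp (Complex.I * t * (s x : ℤ)) - 1)) *
            (∏ x : ↥R, (p ↑x (s x) : ℂ))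

/-- The weight `w₀(R)`: `w₀({x}) = δσ` and, for `|R| ≥ 2`,
`w₀(R) = (1+δσ)^{|R|} Σ_{s_R∈I^R} Π_{x∈R} p_x(s_x) ·
|Σ_{g∈G_R} Π_{{x,y}∈E_g}(e^{J_{xy}s_xs_y}−1)|`. -/
noncomputable def w0 (a b : ℤ) {V : Type*} [DecidableEq V] (δ σ : ℝ)
    (p : V → ℤ → ℝ) (J : V → V → ℝ) (hJ : ∀ x y, J x y = J y x)
    (R : Finset V) : ℝ :=
  if R.card = 1 then δ * σ
  else (1 + δ * σ) ^ R.card *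
    ∑ s ∈ Fintype.piFinset (fun _ : ↥R => Finset.Icc a b),
      (∏ x : ↥R, p ↑x (s x)) *
        ‖∑ g ∈ connGraphs ↥R,
          edgeProd (fun x y : ↥R => J ↑x ↑y) (fun x y => hJ ↑x ↑y)
            (fun x : ↥R => (s x : ℝ)) g‖

noncomputable def connMayerSum {V : Type*} [DecidableEq V] (J : V → V → ℝ)
    (hJ : ∀ x y, J x y = J y x) (R : Finset V) (s : ↥R → ℤ) : ℂ :=
  ∑ g ∈ connGraphs ↥R,
    edgeProd (fun x y : ↥R => J ↑x ↑y) (fun x y => hJ ↑x ↑y) (fun x : ↥R => (s x : ℝ)) g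

noncomputable def spinWeight {V : Type*} (p : V → ℤ → ℝ) (R : Finset V) (s : ↥R → ℤ) : ℝ :=
  ∏ x : ↥R, p ↑x (s x)

noncomputable def totalSpin {V : Type*} {R : Finset V} (s : ↥R → ℤ) : ℝ :=
  ∑ x : ↥R, (s x : ℝ)

theorem hasDerivAt_sum_mul_exp {κ : Type*} (s : Finset κ) (c : κ → ℂ) (z : κ → ℝ) (t : ℝ) :
    HasDerivAt (fun u : ℝ => ∑ k ∈ s, c k * Complex.exp (Complex.I * u * z k))
      (∑ k ∈ s, c k * (Complex.exp (Complex.I * t * z k) * (Complex.I * z k))) t := by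
  refine HasDerivAt.fun_sum fun k _ => HasDerivAt.const_mul (c k) (HasDerivAt.cexp ?_)
  simpa using ((hasDerivAt_id t).ofReal_comp.const_mul Complex.I).mul_const (z k : ℂ)

theorem norm_deriv_sum_mul_exp_le {κ : Type*} (s : Finset κ) (c : κ → ℂ) (z : κ → ℝ) (t : ℝ) :
    ‖deriv (fun u : ℝ => ∑ k ∈ s, c k * Complex.exp (Complex.I * u * z k)) t‖ ≤
      ∑ k ∈ s, ‖c k‖ * |z k| := by
  rw [(hasDerivAt_sum_mul_exp s c z t).deriv]
  refine (norm_sum_le _ _).trans_eq (Finset.sum_congr rfl fun k _ => ?_)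
  have hexp : Complex.I * t * z k = ((t * z k : ℝ) : ℂ) * Complex.I := by push_cast; ring
  rw [norm_mul, norm_mul, hexp, Complex.norm_exp_ofReal_mul_I, norm_mul, Complex.norm_I,
    Complex.norm_real, Real.norm_eq_abs, one_mul, one_mul]

theorem xi_eq_sum_mul_exp (a b : ℤ) {V : Type*} [DecidableEq V] (p : V → ℤ → ℝ)
    (J : V → V → ℝ) (hJ : ∀ x y, J x y = J y x) (R : Finset V) (hR : R.card ≠ 1) :
    xi a b p J hJ R = fun u : ℝ =>
      ∑ s ∈ Fintype.piFinset (fun _ : ↥R => Finset.Icc a b),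
        (connMayerSum J hJ R s * spinWeight p R s) *
          Complex.exp (Complex.I * u * totalSpin s) := by
  funext u
  rw [xi, if_neg hR]
  refine Finset.sum_congr rfl fun s _ => ?_
  have hsubsets : ∑ S ∈ (Finset.univ : Finset ↥R).powerset,
      ∏ x ∈ S, (Complex.exp (Complex.I * u * (s x : ℤ)) - 1) =
        Complex.exp (Complex.I * u * totalSpin s) := by
    rw [← Finset.prod_add_one]
    simp only [sub_add_cancel]
    rw [← Complex.exp_sum, totalSpin, Complex.ofReal_sum, Finset.mul_sum]
    simp only [Complex.ofReal_intCast]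
  simp_rw [← Finset.sum_mul, ← Finset.mul_sum, hsubsets, connMayerSum, spinWeight,
    Complex.ofReal_prod]
  rw [← Finset.sum_mul]
  ring

theorem abs_totalSpin_le {a b : ℤ} {V : Type*} {R : Finset V} {s : ↥R → ℤ}
    (hs : ∀ x, s x ∈ Finset.Icc a b) :
    |totalSpin s| ≤ R.card * max |(a : ℝ)| |(b : ℝ)| := by
  calc |totalSpin s| ≤ ∑ x : ↥R, |(s x : ℝ)| := Finset.abs_sum_le_sum_abs _ _
    _ ≤ ∑ _x : ↥R, max |(a : ℝ)| |(b : ℝ)| := by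
        refine Finset.sum_le_sum fun x _ => ?_
        obtain ⟨hax, hxb⟩ := Finset.mem_Icc.mp (hs x)
        exact abs_le_max_abs_abs (by exact_mod_cast hax) (by exact_mod_cast hxb)
    _ = R.card * max |(a : ℝ)| |(b : ℝ)| := by simp

theorem norm_deriv_xi_le (a b : ℤ) {V : Type*} [DecidableEq V] (p : V → ℤ → ℝ)
    (hp0 : ∀ x, ∀ z ∈ Finset.Icc a b, 0 ≤ p x z)
    (J : V → V → ℝ) (hJ : ∀ x y, J x y = J y x) (R : Finset V) (hR : R.card ≠ 1) (t : ℝ) :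
    ‖deriv (xi a b p J hJ R) t‖ ≤ max |(a : ℝ)| |(b : ℝ)| * R.card *
      ∑ s ∈ Fintype.piFinset (fun _ : ↥R => Finset.Icc a b),
        spinWeight p R s * ‖connMayerSum J hJ R s‖ := by
  rw [xi_eq_sum_mul_exp a b p J hJ R hR, Finset.mul_sum]
  refine (norm_deriv_sum_mul_exp_le _ (fun s => connMayerSum J hJ R s * spinWeight p R s)
    (fun s => totalSpin s) t).trans (Finset.sum_le_sum fun s hs => ?_)
  have hs' := Fintype.mem_piFinset.mp hs
  have hweight : 0 ≤ spinWeight p R s := Finset.prod_nonneg fun x _ => hp0 _ _ (hs' x)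
  rw [norm_mul, Complex.norm_real, Real.norm_of_nonneg hweight]
  calc _ ≤ ‖connMayerSum J hJ R s‖ * spinWeight p R s * (R.card * max |(a : ℝ)| |(b : ℝ)|) :=
        mul_le_mul_of_nonneg_left (abs_totalSpin_le hs') (mul_nonneg (norm_nonneg _) hweight)
    _ = _ := by ring

theorem xi_first_derivative_bound_general
    (a b : ℤ) {V : Type*} [DecidableEq V]
    (p : V → ℤ → ℝ)
    (hp0 : ∀ x, ∀ z ∈ Finset.Icc a b, 0 ≤ p x z)
    (J : V → V → ℝ) (hJ : ∀ x y, J x y = J y x)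
    (δ σ : ℝ) (hδ : 0 < δ) (hσ : σ = max |(a : ℝ)| |(b : ℝ)|)
    (R : Finset V) (hR : 2 ≤ R.card)
    (t : ℝ) :
    ‖deriv (xi a b p J hJ R) t‖ ≤
      σ * (R.card : ℝ) * w0 a b δ σ p J hJ R := by
  have hR1 : R.card ≠ 1 := by omega
  have hσ0 : 0 ≤ σ := hσ ▸ (abs_nonneg _).trans (le_max_left _ _)
  have hderiv := norm_deriv_xi_le a b p hp0 J hJ R hR1 t
  rw [← hσ] at hderiv
  have hM : 0 ≤ ∑ s ∈ Fintype.piFinset (fun _ : ↥R => Finset.Icc a b),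
      spinWeight p R s * ‖connMayerSum J hJ R s‖ :=
    Finset.sum_nonneg fun s hs => mul_nonneg
      (Finset.prod_nonneg fun x _ => hp0 _ _ (Fintype.mem_piFinset.mp hs x)) (norm_nonneg _)
  have hpow : 1 ≤ (1 + δ * σ) ^ R.card := one_le_pow₀ (by nlinarith)
  rw [w0, if_neg hR1]
  refine hderiv.trans (mul_le_mul_of_nonneg_left ?_ (by positivity))
  exact le_mul_of_one_le_left hM hpow

/-- For `R` with `|R| ≥ 2`, probability weights `(p_x)`,
symmetric `(J_{xy})`, `δ > 0`, `σ = max_{s∈I}|s|`: for `0 < t ≤ δ`,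
`|dξ_t(R)/dt| ≤ σ |R| w₀(R)`. -/
theorem xi_first_derivative_bound
    (a b : ℤ) (hab : a < b) {V : Type*} [DecidableEq V]
    (p : V → ℤ → ℝ)
    (hp0 : ∀ x, ∀ z ∈ Finset.Icc a b, 0 ≤ p x z)
    (hp1 : ∀ x, ∑ z ∈ Finset.Icc a b, p x z = 1)
    (J : V → V → ℝ) (hJ : ∀ x y, J x y = J y x)
    (δ σ : ℝ) (hδ : 0 < δ) (hσ : σ = max |(a : ℝ)| |(b : ℝ)|)
    (R : Finset V) (hR : 2 ≤ R.card)
    (t : ℝ) (ht0 : 0 < t) (htδ : t ≤ δ) :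
    ‖deriv (xi a b p J hJ R) t‖ ≤
      σ * (R.card : ℝ) * w0 a b δ σ p J hJ R :=
  xi_first_derivative_bound_general a b p hp0 J hJ δ σ hδ hσ R hR t

end SpinLCLT
end

section
/- Let R be a finite set with |R| ≥ 2, (p_x)_{x∈R} probability weights on I, (J_{xy}) a symmetric family of reals, δ > 0, σ = max_{s∈I}|s|, and let ξ_t(R) = Σ_{s_R∈I^R} Σ_{g∈G_R} Σ_{S⊂R} Π_{{x,y}∈E_g}(e^{J_{xy}s_xs_y}−1) Π_{x∈S}(e^{its_x}−1) Π_{x∈R} p_x(s_x). Then for every t with 0 < t ≤ δ, |d²ξ_t(R)/dt²| ≤ σ² |R|² w_0(R), where w_0(R) = (1+δσ)^{|R|} Σ_{s_R∈I^R} Π_{x∈R} p_x(s_x) · |Σ_{g∈G_R} Π_{{x,y}∈E_g}(e^{J_{xy}s_xs_y}−1)|. -/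
open Finset
open scoped Classical

namespace SpinLCLT

open Complex

theorem hasDerivAt_sum_mul_cexp {ι : Type*} (K : Finset ι) (c z : ι → ℂ) (t : ℝ) :
    HasDerivAt (fun u : ℝ => ∑ k ∈ K, c k * cexp (z k * u))
      (∑ k ∈ K, c k * z k * cexp (z k * t)) t := by
  refine HasDerivAt.fun_sum fun k _ => ?_
  have h := ((hasDerivAt_id (t : ℂ)).const_mul (z k)).cexp.comp_ofReal
  simpa [mul_assoc, mul_comm] using h.const_mul (c k)

theorem deriv_sum_mul_cexp {ι : Type*} (K : Finset ι) (c z : ι → ℂ) :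
    deriv (fun u : ℝ => ∑ k ∈ K, c k * cexp (z k * u)) =
      fun u : ℝ => ∑ k ∈ K, (c k * z k) * cexp (z k * u) :=
  funext fun t => (hasDerivAt_sum_mul_cexp K c z t).deriv

theorem norm_deriv_deriv_sum_mul_cexp_le {ι : Type*} (K : Finset ι) (c : ι → ℂ) (ω : ι → ℝ)
    {M : ℝ} (hω : ∀ k ∈ K, |ω k| ≤ M) (t : ℝ) :
    ‖deriv (deriv fun u : ℝ => ∑ k ∈ K, c k * cexp (ω k * I * u)) t‖ ≤
      M ^ 2 * ∑ k ∈ K, ‖c k‖ := by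
  rw [deriv_sum_mul_cexp, deriv_sum_mul_cexp, Finset.mul_sum]
  refine (norm_sum_le _ _).trans (Finset.sum_le_sum fun k hk => ?_)
  have hphase : (ω k : ℂ) * I * t = ((ω k * t : ℝ) : ℂ) * I := by push_cast; ring
  have hωM : ω k ^ 2 ≤ M ^ 2 := sq_le_sq' (abs_le.mp (hω k hk)).1 (abs_le.mp (hω k hk)).2
  calc ‖c k * (ω k * I) * (ω k * I) * cexp (ω k * I * t)‖ = ω k ^ 2 * ‖c k‖ := by
        rw [hphase, norm_mul, norm_exp_ofReal_mul_I]
        simp [sq, mul_comm, mul_left_comm]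
    _ ≤ M ^ 2 * ‖c k‖ := by gcongr

theorem abs_sum_le_card_mul_of_mem_piFinset_Icc {ι : Type*} [Fintype ι] [DecidableEq ι]
    {a b : ℤ} {s : ι → ℤ} (hs : s ∈ Fintype.piFinset fun _ => Finset.Icc a b) :
    |∑ x, (s x : ℝ)| ≤ Fintype.card ι * max |(a : ℝ)| |(b : ℝ)| := by
  refine (Finset.abs_sum_le_sum_abs _ _).trans ?_
  calc ∑ x, |(s x : ℝ)| ≤ ∑ _x : ι, max |(a : ℝ)| |(b : ℝ)| := Finset.sum_le_sum fun x _ => ?_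
    _ = Fintype.card ι * max |(a : ℝ)| |(b : ℝ)| := by simp
  obtain ⟨hax, hxb⟩ := Finset.mem_Icc.mp (Fintype.mem_piFinset.mp hs x)
  exact abs_le_max_abs_abs (by exact_mod_cast hax) (by exact_mod_cast hxb)

theorem prod_nonneg_of_mem_piFinset_Icc {ι V : Type*} [Fintype ι] [DecidableEq ι] {a b : ℤ}
    {p : V → ℤ → ℝ} (hp0 : ∀ x, ∀ z ∈ Finset.Icc a b, 0 ≤ p x z) (f : ι → V) {s : ι → ℤ}
    (hs : s ∈ Fintype.piFinset fun _ => Finset.Icc a b) :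
    0 ≤ ∏ x, p (f x) (s x) :=
  Finset.prod_nonneg fun x _ => hp0 _ _ (Fintype.mem_piFinset.mp hs x)

noncomputable def mayerSum {V : Type*} [DecidableEq V] (J : V → V → ℝ)
    (hJ : ∀ x y, J x y = J y x) (R : Finset V) (s : ↥R → ℤ) : ℂ :=
  ∑ g ∈ connGraphs ↥R,
    edgeProd (fun x y : ↥R => J ↑x ↑y) (fun x y => hJ ↑x ↑y) (fun x : ↥R => (s x : ℝ)) g

/-- Summing over `S ⊆ R` turns `Π_{x∈S}(e^{its_x}−1)` into `e^{it Σ_x s_x}`, so `ξ_t(R)` is a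
trigonometric polynomial in `t` with frequencies `Σ_x s_x`. -/
theorem xi_eq_sum_mul_cexp (a b : ℤ) {V : Type*} [DecidableEq V] (p : V → ℤ → ℝ)
    (J : V → V → ℝ) (hJ : ∀ x y, J x y = J y x) (R : Finset V) (hR : R.card ≠ 1) :
    xi a b p J hJ R = fun u : ℝ =>
      ∑ s ∈ Fintype.piFinset (fun _ : ↥R => Finset.Icc a b),
        (mayerSum J hJ R s * ∏ x : ↥R, (p ↑x (s x) : ℂ)) *
          cexp ((∑ x, (s x : ℝ) : ℝ) * I * u) := by
  funext u
  rw [xi, if_neg hR]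
  refine Finset.sum_congr rfl fun s _ => ?_
  have hS : ∑ S ∈ (Finset.univ : Finset ↥R).powerset,
      ∏ x ∈ S, (cexp (I * u * (s x : ℤ)) - 1) = cexp ((∑ x, (s x : ℝ) : ℝ) * I * u) := by
    rw [← Finset.prod_add_one]
    simp only [sub_add_cancel, ← Complex.exp_sum]
    push_cast
    rw [Finset.sum_mul, Finset.sum_mul]
    exact congrArg cexp (Finset.sum_congr rfl fun x _ => by ring)
  simp only [← Finset.sum_mul, ← Finset.mul_sum, hS, mayerSum]
  ring

theorem sum_prod_mul_norm_mayerSum_le_w0 (a b : ℤ) {V : Type*} [DecidableEq V] (δ σ : ℝ)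
    (hδσ : 0 ≤ δ * σ) (p : V → ℤ → ℝ) (hp0 : ∀ x, ∀ z ∈ Finset.Icc a b, 0 ≤ p x z)
    (J : V → V → ℝ) (hJ : ∀ x y, J x y = J y x) (R : Finset V) (hR : R.card ≠ 1) :
    ∑ s ∈ Fintype.piFinset (fun _ : ↥R => Finset.Icc a b),
        (∏ x : ↥R, p ↑x (s x)) * ‖mayerSum J hJ R s‖ ≤ w0 a b δ σ p J hJ R := by
  rw [w0, if_neg hR]
  refine le_mul_of_one_le_left (Finset.sum_nonneg fun s hs => ?_) (one_le_pow₀ (by linarith))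
  exact mul_nonneg (prod_nonneg_of_mem_piFinset_Icc hp0 _ hs) (norm_nonneg _)

theorem xi_second_derivative_bound_general
    (a b : ℤ) {V : Type*} [DecidableEq V]
    (p : V → ℤ → ℝ)
    (hp0 : ∀ x, ∀ z ∈ Finset.Icc a b, 0 ≤ p x z)
    (J : V → V → ℝ) (hJ : ∀ x y, J x y = J y x)
    (δ σ : ℝ) (hδ : 0 < δ) (hσ : σ = max |(a : ℝ)| |(b : ℝ)|)
    (R : Finset V) (hR : 2 ≤ R.card)
    (t : ℝ) :
    ‖deriv (deriv (xi a b p J hJ R)) t‖ ≤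
      σ ^ 2 * (R.card : ℝ) ^ 2 * w0 a b δ σ p J hJ R := by
  have hR1 : R.card ≠ 1 := by omega
  have hσ0 : 0 ≤ σ := hσ ▸ (abs_nonneg _).trans (le_max_left _ _)
  have hfreq : ∀ s ∈ Fintype.piFinset (fun _ : ↥R => Finset.Icc a b),
      |∑ x, (s x : ℝ)| ≤ R.card * σ := fun s hs => by
    simpa only [Fintype.card_coe, ← hσ] using abs_sum_le_card_mul_of_mem_piFinset_Icc hs
  have hcoeff : ∀ s ∈ Fintype.piFinset (fun _ : ↥R => Finset.Icc a b),
      ‖mayerSum J hJ R s * ∏ x : ↥R, (p ↑x (s x) : ℂ)‖ =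
        (∏ x : ↥R, p ↑x (s x)) * ‖mayerSum J hJ R s‖ := fun s hs => by
    rw [norm_mul, ← Complex.ofReal_prod, Complex.norm_real,
      Real.norm_of_nonneg (prod_nonneg_of_mem_piFinset_Icc hp0 _ hs), mul_comm]
  calc ‖deriv (deriv (xi a b p J hJ R)) t‖
      ≤ (R.card * σ) ^ 2 * ∑ s ∈ Fintype.piFinset (fun _ : ↥R => Finset.Icc a b),
          (∏ x : ↥R, p ↑x (s x)) * ‖mayerSum J hJ R s‖ := by
        rw [xi_eq_sum_mul_cexp a b p J hJ R hR1, ← Finset.sum_congr rfl hcoeff]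
        exact norm_deriv_deriv_sum_mul_cexp_le _ _ _ hfreq t
    _ ≤ σ ^ 2 * (R.card : ℝ) ^ 2 * w0 a b δ σ p J hJ R := by
        rw [mul_pow, mul_comm ((R.card : ℝ) ^ 2)]
        gcongr
        exact sum_prod_mul_norm_mayerSum_le_w0 a b δ σ (by positivity) p hp0 J hJ R hR1

/-- For `R` with `|R| ≥ 2`, probability weights `(p_x)`,
symmetric `(J_{xy})`, `δ > 0`, `σ = max_{s∈I}|s|`: for `0 < t ≤ δ`,
`|d²ξ_t(R)/dt²| ≤ σ² |R|² w₀(R)`. -/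
theorem xi_second_derivative_bound
    (a b : ℤ) (hab : a < b) {V : Type*} [DecidableEq V]
    (p : V → ℤ → ℝ)
    (hp0 : ∀ x, ∀ z ∈ Finset.Icc a b, 0 ≤ p x z)
    (hp1 : ∀ x, ∑ z ∈ Finset.Icc a b, p x z = 1)
    (J : V → V → ℝ) (hJ : ∀ x y, J x y = J y x)
    (δ σ : ℝ) (hδ : 0 < δ) (hσ : σ = max |(a : ℝ)| |(b : ℝ)|)
    (R : Finset V) (hR : 2 ≤ R.card)
    (t : ℝ) (ht0 : 0 < t) (htδ : t ≤ δ) :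
    ‖deriv (deriv (xi a b p J hJ R)) t‖ ≤
      σ ^ 2 * (R.card : ℝ) ^ 2 * w0 a b δ σ p J hJ R :=
  xi_second_derivative_bound_general a b p hp0 J hJ δ σ hδ hσ R hR t

end SpinLCLT
end

section
/- Let p be a probability distribution on the finite integer interval I with p(s) ≥ κ for all s ∈ I, where 0 < κ ≤ 1, and let σ = max_{s∈I}|s| ≥ 1. Then for every θ with |θ| ≤ κ/(12σ), Σ_{s∈I} p(s) s² cos(θs) ≥ (7/8) κ σ². -/
open Finset

/-- If `p` is a probability distribution on the finite integer
interval `I = {m,…,n}` (`m < n`) with `p(s) ≥ κ` for all `s ∈ I`, `0 < κ ≤ 1`,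
`σ = max_{s∈I}|s| ≥ 1`, then for every `θ` with `|θ| ≤ κ/(12σ)`,
`Σ_{s∈I} p(s) s² cos(θs) ≥ (7/8) κ σ²`. -/
theorem second_moment_cos_lower_bound
    (m n : ℤ) (hmn : m < n) (p : ℤ → ℝ) (κ σ : ℝ)
    (hκ0 : 0 < κ) (hκ1 : κ ≤ 1)
    (hσ : σ = max |(m : ℝ)| |(n : ℝ)|) (hσ1 : 1 ≤ σ)
    (hp0 : ∀ s ∈ Finset.Icc m n, 0 ≤ p s)
    (hp1 : ∑ s ∈ Finset.Icc m n, p s = 1)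
    (hpκ : ∀ s ∈ Finset.Icc m n, κ ≤ p s)
    (θ : ℝ) (hθ : |θ| ≤ κ / (12 * σ)) :
    (7 / 8) * κ * σ ^ 2 ≤
      ∑ s ∈ Finset.Icc m n, p s * (s : ℝ) ^ 2 * Real.cos (θ * s) := by
  have hσ0 : (0:ℝ) < σ := lt_of_lt_of_le one_pos hσ1
  -- bound |θ| ≤ 1/(12σ) ≤ κ/(12σ)
  have hθσ : |θ| * σ ≤ κ / 12 := by
    have h' : |θ| * (12 * σ) ≤ κ := by
      rw [← le_div_iff₀ (by positivity)]; exact hθ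
    nlinarith
  -- for s in the interval, |s| ≤ σ
  have habs : ∀ s ∈ Finset.Icc m n, |(s:ℝ)| ≤ σ := by
    intro s hs
    rw [Finset.mem_Icc] at hs
    rw [hσ, abs_le]
    constructor
    · have h1 : (m:ℝ) ≤ s := by exact_mod_cast hs.1
      have h2 : -|(m:ℝ)| ≤ m := neg_abs_le _
      have h3 : |(m:ℝ)| ≤ max |(m:ℝ)| |(n:ℝ)| := le_max_left _ _
      linarith
    · exact le_trans (by exact_mod_cast hs.2) ((le_abs_self _).trans (le_max_right _ _))
  -- cos bound at any point of the interval
  have hcos : ∀ s ∈ Finset.Icc m n, (7:ℝ)/8 ≤ Real.cos (θ * s) := by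
    intro s hs
    have h1 : |θ * s| ≤ κ / 12 := by
      rw [abs_mul]
      calc |θ| * |(s:ℝ)| ≤ |θ| * σ := mul_le_mul_of_nonneg_left (habs s hs) (abs_nonneg _)
        _ ≤ κ / 12 := hθσ
    have h2 : |θ * s| ≤ 1/12 := h1.trans (by linarith)
    have := Real.one_sub_sq_div_two_le_cos (x := θ * s)
    have hsq : (θ * (s:ℝ))^2 ≤ (1/12)^2 := by
      rw [← sq_abs]
      exact pow_le_pow_left₀ (abs_nonneg _) h2 2
    nlinarith
  -- choose the maximizing point s*
  set t : ℤ := if |(n:ℝ)| ≤ |(m:ℝ)| then m else n with ht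
  have htmem : t ∈ Finset.Icc m n := by
    rw [Finset.mem_Icc, ht]
    split <;> omega
  have htabs : |(t:ℝ)| = σ := by
    rw [hσ, ht]
    split_ifs with h
    · exact (max_eq_left h).symm
    · push_neg at h
      exact (max_eq_right h.le).symm
  have hterm : (7/8) * κ * σ ^ 2 ≤ p t * (t:ℝ)^2 * Real.cos (θ * t) := by
    have h1 : κ ≤ p t := hpκ t htmem
    have h2 : (t:ℝ)^2 = σ^2 := by rw [← sq_abs, htabs]
    have h3 := hcos t htmem
    rw [h2]
    nlinarith [mul_nonneg (mul_nonneg (hκ0.le.trans h1) (sq_nonneg σ))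
        (by linarith : (0:ℝ) ≤ Real.cos (θ * t) - 7/8),
      mul_nonneg (sub_nonneg.2 h1) (sq_nonneg σ)]
  refine hterm.trans (Finset.single_le_sum (f := fun s => p s * (s:ℝ)^2 * Real.cos (θ * s)) ?_ htmem)
  intro s hs
  have := hcos s hs
  have := hp0 s hs
  positivity
end
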